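/- For c ≥ 7, e_p(c) = e_p(c−2) + 2·e_p(c−4), where e_p(c) counts palindromic or anti-palindromic even-length sequences of nonzero integers with 2·Σ|a_i| − ℓ = c. -/

import Mathlib

open Classical

/-- The number of sign changes in a finite sequence of integers. -/
def signChanges (l : List ℤ) : ℕ :=
  ((l.zip l.tail).filter (fun p => p.1 * p.2 < 0)).length

/-- The sum of the absolute values of the entries. -/
def absSum (l : List ℤ) : ℕ := (l.map Int.natAbs).sum

/-- An even continued fraction representation: a nonempty even-length
sequence of nonzero integers. -/
def IsECF (l : List ℤ) : Prop :=
  l ≠ [] ∧ Even l.length ∧ ∀ x ∈ l, x ≠ 0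

/-- Palindromic or anti-palindromic sequences. -/
def IsPalOrAnti (l : List ℤ) : Prop :=
  l.reverse = l ∨ l.reverse = l.map (fun x => -x)

/-- The set `E(c)` of even continued fractions with crossing number `c`. -/
def Ecross (c : ℕ) : Set (List ℤ) :=
  {l | IsECF l ∧ (2 * absSum l : ℤ) - signChanges l = c}

/-- The set `E(c,b)` of even continued fractions with crossing number `c`
and braid index `b`. -/
def Eset (c b : ℕ) : Set (List ℤ) :=
  {l | IsECF l ∧ (2 * absSum l : ℤ) - signChanges l = c ∧
    (absSum l : ℤ) - signChanges l + 1 = b}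

noncomputable def e (c b : ℕ) : ℕ := (Eset c b).ncard

noncomputable def eTot (c : ℕ) : ℕ := (Ecross c).ncard

noncomputable def ep (c b : ℕ) : ℕ := (Eset c b ∩ {l | IsPalOrAnti l}).ncard

noncomputable def epTot (c : ℕ) : ℕ := (Ecross c ∩ {l | IsPalOrAnti l}).ncard

/-!
An even-length palindrome is `h ++ reverse h` and an even-length anti-palindrome is
`h ++ reverse (-h)`. With `w(h) = 2·Σ|hᵢ| − ℓ(h)`, their crossing numbers are `2·w(h)` and
`2·w(h) − 1`, the anti-palindrome having one extra sign change in the middle. Hence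
`e_p(c) = N(⌈c/2⌉)`, where `N(k)` counts the nonempty sequences of nonzero integers with
`w = k`, and it suffices to show `N(k) = N(k-1) + 2·N(k-2)` for `k ≥ 3`. Sort such a sequence by
its first entry `a`: if `|a| ≥ 2`, moving `a` one step towards `0` lowers `w` by `2`; if `|a| = 1`
(then a second entry exists, as `k ≥ 3`), deleting `a` lowers `w` by `1` or `2` according as a sign
change follows `a` or not. Each of the three operations is invertible.
-/

namespace List

variable {α : Type*}

lemma finite_length_le_of_forall_mem {s : Set α} (hs : s.Finite) (n : ℕ) :
    {l : List α | l.length ≤ n ∧ ∀ x ∈ l, x ∈ s}.Finite := by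
  have : Finite s := hs
  refine ((finite_length_le s n).image (map Subtype.val)).subset ?_
  rintro l ⟨hlen, hmem⟩
  lift l to List s using hmem
  exact ⟨l, by simpa using hlen, rfl⟩

def mirror (f : α → α) (l : List α) : List α := l ++ (l.map f).reverse

lemma length_mirror (f : α → α) (l : List α) : (mirror f l).length = 2 * l.length := by
  simp [mirror, two_mul]

lemma mirror_injective (f : α → α) : Function.Injective (mirror f) := fun l l' h =>
  (append_inj h (by simpa [length_mirror] using congrArg length h)).1

lemma reverse_mirror {f : α → α} (hf : Function.Involutive f) (l : List α) :
    (mirror f l).reverse = (mirror f l).map f := by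
  simp [mirror, map_reverse, hf.comp_self]

lemma eq_mirror_take_of_reverse_eq_map {f : α → α} {l : List α} (hl : Even l.length)
    (h : l.reverse = l.map f) : l = mirror f (l.take (l.length / 2)) := by
  obtain ⟨m, hm⟩ := hl
  have hsplit := l.take_append_drop (l.length / 2)
  rw [← hsplit, reverse_append, map_append] at h
  have := (append_inj h (by simp; omega)).1
  rw [mirror, ← this, reverse_reverse, hsplit]

end List

namespace Int

lemma sign_add_sign (a : ℤ) : (a + a.sign).sign = a.sign := by
  rcases lt_trichotomy a 0 with h | rfl | h
  · rw [sign_eq_neg_one_of_neg h, sign_eq_neg_one_of_neg (by omega)]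
  · rfl
  · rw [sign_eq_one_of_pos h, sign_eq_one_of_pos (by omega)]

lemma natAbs_add_sign {a : ℤ} (ha : a ≠ 0) : (a + a.sign).natAbs = a.natAbs + 1 := by
  rcases lt_or_gt_of_ne ha with h | h
  · rw [sign_eq_neg_one_of_neg h]; omega
  · rw [sign_eq_one_of_pos h]; omega

lemma add_sign_injective : Function.Injective fun a : ℤ => a + a.sign := by
  intro a b h
  have hs : a.sign = b.sign := by simpa only [sign_add_sign] using congrArg sign h
  simp only [hs] at h
  omega

lemma exists_add_sign_eq {a : ℤ} (ha : 2 ≤ a.natAbs) : ∃ b ≠ 0, b + b.sign = a := by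
  rcases lt_or_gt_of_ne (show a ≠ 0 by omega) with h | h
  · exact ⟨a + 1, by omega, by rw [sign_eq_neg_one_of_neg (by omega)]; ring⟩
  · exact ⟨a - 1, by omega, by rw [sign_eq_one_of_pos (by omega)]; ring⟩

lemma eq_neg_sign_of_mul_neg {s b : ℤ} (hs : s.natAbs = 1) (h : s * b < 0) : s = -b.sign := by
  rcases natAbs_eq_natAbs_iff.1 (hs.trans natAbs_one.symm) with rfl | rfl
  · rw [sign_eq_neg_one_of_neg (by omega)]; rfl
  · rw [sign_eq_one_of_pos (by omega)]

lemma eq_sign_of_not_mul_neg {s b : ℤ} (hs : s.natAbs = 1) (hb : b ≠ 0) (h : ¬s * b < 0) :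
    s = b.sign := by
  rcases natAbs_eq_natAbs_iff.1 (hs.trans natAbs_one.symm) with rfl | rfl
  · rw [sign_eq_one_of_pos (by omega)]
  · rw [sign_eq_neg_one_of_neg (by omega)]

end Int

open List

-- For `l = []` the junk value `[].headI = 0` makes the correction term vanish.
lemma signChanges_cons (a : ℤ) (l : List ℤ) :
    signChanges (a :: l) = signChanges l + if a * l.headI < 0 then 1 else 0 := by
  cases l with
  | nil => simp [signChanges]
  | cons b t =>
    by_cases hab : a * b < 0 <;> simp [signChanges, hab]

lemma signChanges_singleton (a : ℤ) : signChanges [a] = 0 := rfl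

lemma signChanges_append_cons_cons (u : List ℤ) (x y : ℤ) (v : List ℤ) :
    signChanges (u ++ x :: y :: v) =
      signChanges (u ++ [x]) + signChanges (y :: v) + if x * y < 0 then 1 else 0 := by
  induction u with
  | nil => rw [nil_append, nil_append, signChanges_cons, signChanges_singleton, headI_cons]; omega
  | cons a u ih =>
    have hhead : (u ++ x :: y :: v).headI = (u ++ [x]).headI := by cases u <;> rfl
    simp only [cons_append, signChanges_cons, ih, hhead]
    omega

lemma signChanges_reverse (l : List ℤ) : signChanges l.reverse = signChanges l := by
  induction l with
  | nil => rfl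
  | cons a l ih =>
    cases l with
    | nil => rfl
    | cons b t =>
      have : (a :: b :: t).reverse = t.reverse ++ b :: [a] := by simp
      rw [this, signChanges_append_cons_cons, ← reverse_cons, ih, signChanges_singleton,
        signChanges_cons a, headI_cons, mul_comm b a]
      omega

lemma signChanges_map_neg (l : List ℤ) : signChanges (l.map Neg.neg) = signChanges l := by
  induction l with
  | nil => rfl
  | cons a l ih =>
    have hhead : (l.map Neg.neg).headI = -l.headI := by cases l <;> simp
    rw [map_cons, signChanges_cons, signChanges_cons, ih, hhead, neg_mul_neg]

-- `l ∈ Ecross c` unfolds to `IsECF l ∧ weight l = c`.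
def weight (l : List ℤ) : ℤ := 2 * absSum l - signChanges l

lemma signChanges_mirror_concat (f : ℤ → ℤ) (u : List ℤ) (x : ℤ) :
    signChanges (mirror f (u ++ [x])) = signChanges (u ++ [x]) +
      signChanges ((u ++ [x]).map f) + if x * f x < 0 then 1 else 0 := by
  have : mirror f (u ++ [x]) = u ++ x :: f x :: (u.map f).reverse := by simp [mirror]
  rw [this, signChanges_append_cons_cons, ← signChanges_reverse ((u ++ [x]).map f)]
  simp

lemma absSum_mirror {f : ℤ → ℤ} (hf : ∀ x, (f x).natAbs = x.natAbs) (h : List ℤ) :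
    absSum (mirror f h) = 2 * absSum h := by
  simp [absSum, mirror, Function.comp_def, hf, two_mul]

lemma weight_mirror_id {h : List ℤ} (hne : h ≠ []) : weight (mirror id h) = 2 * weight h := by
  obtain ⟨u, x, rfl⟩ := (eq_nil_or_concat h).resolve_left hne
  rw [concat_eq_append] at *
  have hsc := signChanges_mirror_concat id u x
  simp only [map_id, id, if_neg (not_lt.2 (mul_self_nonneg x))] at hsc
  rw [weight, weight, hsc, absSum_mirror (f := id) (fun _ => rfl)]
  push_cast
  ring

lemma weight_mirror_neg {h : List ℤ} (hne : h ≠ []) (hnz : ∀ x ∈ h, x ≠ 0) :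
    weight (mirror Neg.neg h) = 2 * weight h - 1 := by
  obtain ⟨u, x, rfl⟩ := (eq_nil_or_concat h).resolve_left hne
  rw [concat_eq_append] at *
  have hx : x * -x < 0 := by
    rw [mul_neg, neg_lt_zero]; exact mul_self_pos.2 (hnz x (by simp))
  have hsc := signChanges_mirror_concat Neg.neg u x
  rw [signChanges_map_neg, if_pos hx] at hsc
  rw [weight, weight, hsc, absSum_mirror Int.natAbs_neg]
  push_cast
  ring

lemma isECF_mirror_iff {f : ℤ → ℤ} (hf : ∀ x, f x = 0 → x = 0) {h : List ℤ} :
    IsECF (mirror f h) ↔ h ≠ [] ∧ ∀ x ∈ h, x ≠ 0 := by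
  simp only [IsECF, length_mirror, even_two_mul, true_and]
  constructor
  · rintro ⟨hne, hnz⟩
    exact ⟨by rintro rfl; exact hne rfl, fun x hx => hnz x (mem_append_left _ hx)⟩
  · rintro ⟨hne, hnz⟩
    refine ⟨by simpa [mirror] using hne, fun x hx => ?_⟩
    rcases mem_append.1 hx with hx | hx
    · exact hnz x hx
    · obtain ⟨y, hy, rfl⟩ := mem_map.1 (mem_reverse.1 hx)
      exact fun h0 => hnz y hy (hf y h0)

lemma mem_Ecross_inter_isPalOrAnti_iff {c : ℕ} {l : List ℤ} :
    l ∈ Ecross c ∩ {l | IsPalOrAnti l} ↔ ∃ h : List ℤ, h ≠ [] ∧ (∀ x ∈ h, x ≠ 0) ∧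
      (l = mirror id h ∧ 2 * weight h = c ∨ l = mirror Neg.neg h ∧ 2 * weight h = c + 1) := by
  constructor
  · rintro ⟨⟨hl, hc⟩, hpal | hanti⟩
    · have hl' := eq_mirror_take_of_reverse_eq_map (f := id) hl.2.1 (by simpa using hpal)
      rw [hl', isECF_mirror_iff (f := id) (fun _ => id)] at hl
      change weight l = c at hc
      rw [hl', weight_mirror_id hl.1] at hc
      exact ⟨_, hl.1, hl.2, Or.inl ⟨hl', hc⟩⟩
    · have hl' := eq_mirror_take_of_reverse_eq_map hl.2.1 hanti
      rw [hl', isECF_mirror_iff (fun _ => neg_eq_zero.1)] at hl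
      change weight l = c at hc
      rw [hl', weight_mirror_neg hl.1 hl.2] at hc
      exact ⟨_, hl.1, hl.2, Or.inr ⟨hl', by omega⟩⟩
  · rintro ⟨h, hne, hnz, ⟨rfl, hc⟩ | ⟨rfl, hc⟩⟩
    · refine ⟨⟨(isECF_mirror_iff (f := id) (fun _ => id)).2 ⟨hne, hnz⟩, ?_⟩, Or.inl ?_⟩
      · change weight _ = _
        rw [weight_mirror_id hne, hc]
      · simpa using reverse_mirror (f := id) (fun _ => rfl) h
    · refine ⟨⟨(isECF_mirror_iff (fun _ => neg_eq_zero.1)).2 ⟨hne, hnz⟩, ?_⟩, Or.inr ?_⟩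
      · change weight _ = _
        rw [weight_mirror_neg hne hnz]
        omega
      · exact reverse_mirror neg_involutive h

def halves (k : ℕ) : Set (List ℤ) := {l | l ≠ [] ∧ (∀ x ∈ l, x ≠ 0) ∧ weight l = k}

theorem epTot_eq_ncard_halves (c : ℕ) : epTot c = (halves ((c + 1) / 2)).ncard := by
  rw [epTot, ← Set.ncard_image_of_injective (halves _)
    (mirror_injective (if Even c then id else Neg.neg))]
  congr 1
  ext l
  rw [mem_Ecross_inter_isPalOrAnti_iff]
  obtain ⟨m, rfl | rfl⟩ := Nat.even_or_odd' c
  · simp only [even_two_mul, if_true, Set.mem_image, halves, Set.mem_ofPred_eq]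
    constructor
    · rintro ⟨h, hne, hnz, ⟨rfl, hw⟩ | ⟨-, hw⟩⟩
      · exact ⟨h, ⟨hne, hnz, by omega⟩, rfl⟩
      · omega
    · rintro ⟨h, ⟨hne, hnz, hw⟩, rfl⟩
      exact ⟨h, hne, hnz, Or.inl ⟨rfl, by omega⟩⟩
  · simp only [Nat.not_even_two_mul_add_one, if_false, Set.mem_image, halves, Set.mem_ofPred_eq]
    constructor
    · rintro ⟨h, hne, hnz, ⟨-, hw⟩ | ⟨rfl, hw⟩⟩
      · omega
      · exact ⟨h, ⟨hne, hnz, by omega⟩, rfl⟩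
    · rintro ⟨h, ⟨hne, hnz, hw⟩, rfl⟩
      exact ⟨h, hne, hnz, Or.inr ⟨rfl, by omega⟩⟩

lemma weight_cons (a : ℤ) (l : List ℤ) :
    weight (a :: l) = weight l + 2 * a.natAbs - if a * l.headI < 0 then 1 else 0 := by
  simp only [weight, signChanges_cons, absSum, map_cons, sum_cons]
  push_cast
  split_ifs <;> ring

lemma weight_cons_of_sign_eq {a b : ℤ} (h : a.sign = b.sign) (l : List ℤ) :
    weight (a :: l) = weight (b :: l) + 2 * a.natAbs - 2 * b.natAbs := by
  have hneg : a * l.headI < 0 ↔ b * l.headI < 0 := by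
    rw [← Int.sign_eq_neg_one_iff_neg, ← Int.sign_eq_neg_one_iff_neg, Int.sign_mul, Int.sign_mul, h]
  rw [weight_cons, weight_cons, if_congr hneg rfl rfl]
  ring

lemma signChanges_lt_length {l : List ℤ} (hne : l ≠ []) : signChanges l < l.length := by
  have := length_pos_iff.2 hne
  refine (length_filter_le _ _).trans_lt ?_
  simp only [length_zip, length_tail]
  omega

lemma length_le_absSum {l : List ℤ} (hnz : ∀ x ∈ l, x ≠ 0) : l.length ≤ absSum l := by
  rw [absSum]
  simpa using length_le_sum_of_one_le (l.map Int.natAbs) (by simpa [Nat.one_le_iff_ne_zero])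

lemma natAbs_le_absSum {l : List ℤ} {x : ℤ} (hx : x ∈ l) : x.natAbs ≤ absSum l :=
  le_sum_of_mem (mem_map_of_mem hx)

lemma absSum_lt_weight {l : List ℤ} (hne : l ≠ []) (hnz : ∀ x ∈ l, x ≠ 0) :
    (absSum l : ℤ) < weight l := by
  have := signChanges_lt_length hne
  have := length_le_absSum hnz
  rw [weight]
  omega

lemma halves_finite (k : ℕ) : (halves k).Finite := by
  refine (finite_length_le_of_forall_mem (Set.finite_Icc (-k : ℤ) k) k).subset ?_
  rintro l ⟨hne, hnz, hw⟩
  have hk : absSum l < k := by have := absSum_lt_weight hne hnz; omega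
  refine ⟨(length_le_absSum hnz).trans hk.le, fun x hx => ?_⟩
  have := natAbs_le_absSum hx
  simp only [Set.mem_Icc]
  omega

def consNegSign (l : List ℤ) : List ℤ := -l.headI.sign :: l

def consSign (l : List ℤ) : List ℤ := l.headI.sign :: l

def growHead : List ℤ → List ℤ := modifyHead fun a => a + a.sign

lemma consNegSign_injective : Function.Injective consNegSign := fun _ _ h => (cons.inj h).2

lemma consSign_injective : Function.Injective consSign := fun _ _ h => (cons.inj h).2

lemma growHead_injective : Function.Injective growHead := by
  rintro (_ | ⟨a, t⟩) (_ | ⟨b, u⟩) h <;> simp only [growHead, modifyHead_nil, modifyHead_cons,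
    reduceCtorEq, cons.injEq] at h ⊢
  exact ⟨Int.add_sign_injective h.1, h.2⟩

lemma consNegSign_mem_halves {j : ℕ} {l : List ℤ} (hl : l ∈ halves j) :
    consNegSign l ∈ halves (j + 1) := by
  obtain ⟨hne, hnz, hw⟩ := hl
  obtain ⟨b, t, rfl⟩ := exists_cons_of_ne_nil hne
  have hb := hnz b mem_cons_self
  have hneg : -b.sign * b < 0 := by
    rw [neg_mul, Int.sign_mul_self, neg_lt_zero]; exact_mod_cast Int.natAbs_pos.2 hb
  refine ⟨cons_ne_nil _ _, forall_mem_cons.2 ⟨by simpa using hb, hnz⟩, ?_⟩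
  rw [consNegSign, headI_cons, weight_cons, headI_cons, if_pos hneg, Int.natAbs_neg,
    Int.natAbs_sign_of_ne_zero hb, hw]
  push_cast
  ring

lemma consSign_mem_halves {j : ℕ} {l : List ℤ} (hl : l ∈ halves j) :
    consSign l ∈ halves (j + 2) := by
  obtain ⟨hne, hnz, hw⟩ := hl
  obtain ⟨b, t, rfl⟩ := exists_cons_of_ne_nil hne
  have hb := hnz b mem_cons_self
  have hpos : ¬b.sign * b < 0 := by rw [Int.sign_mul_self]; omega
  refine ⟨cons_ne_nil _ _, forall_mem_cons.2 ⟨by simpa using hb, hnz⟩, ?_⟩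
  rw [consSign, headI_cons, weight_cons, headI_cons, if_neg hpos, Int.natAbs_sign_of_ne_zero hb, hw]
  push_cast
  ring

lemma growHead_mem_halves {j : ℕ} {l : List ℤ} (hl : l ∈ halves j) :
    growHead l ∈ halves (j + 2) := by
  obtain ⟨hne, hnz, hw⟩ := hl
  obtain ⟨b, t, rfl⟩ := exists_cons_of_ne_nil hne
  have hb := hnz b mem_cons_self
  refine ⟨cons_ne_nil _ _, forall_mem_cons.2 ⟨?_, fun x hx => hnz x (mem_cons_of_mem _ hx)⟩, ?_⟩
  · rw [← Int.natAbs_ne_zero, Int.natAbs_add_sign hb]; omega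
  · rw [growHead, modifyHead_cons, weight_cons_of_sign_eq (Int.sign_add_sign b), hw,
      Int.natAbs_add_sign hb]
    push_cast
    ring

lemma mem_halves_add_three {k : ℕ} {l : List ℤ} (hl : l ∈ halves (k + 3)) :
    l ∈ consNegSign '' halves (k + 2) ∪ consSign '' halves (k + 1) ∪
      growHead '' halves (k + 1) := by
  obtain ⟨hne, hnz, hw⟩ := hl
  obtain ⟨a, t, rfl⟩ := exists_cons_of_ne_nil hne
  have hnzt : ∀ x ∈ t, x ≠ 0 := fun x hx => hnz x (mem_cons_of_mem _ hx)
  obtain ha | ha : a.natAbs = 1 ∨ 2 ≤ a.natAbs := by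
    have := Int.natAbs_ne_zero.2 (hnz a mem_cons_self)
    omega
  · rcases t with _ | ⟨b, t⟩
    · have : weight [a] = 2 := by simp [weight, absSum, signChanges, ha]
      omega
    rw [weight_cons, ha, headI_cons] at hw
    by_cases hab : a * b < 0
    · rw [if_pos hab] at hw
      refine Or.inl (Or.inl ⟨b :: t, ⟨cons_ne_nil _ _, hnzt, by push_cast at hw ⊢; omega⟩, ?_⟩)
      rw [consNegSign, headI_cons, ← Int.eq_neg_sign_of_mul_neg ha hab]
    · rw [if_neg hab] at hw
      refine Or.inl (Or.inr ⟨b :: t, ⟨cons_ne_nil _ _, hnzt, by push_cast at hw ⊢; omega⟩, ?_⟩)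
      rw [consSign, headI_cons, ← Int.eq_sign_of_not_mul_neg ha (hnzt b mem_cons_self) hab]
  · obtain ⟨b, hb, rfl⟩ := Int.exists_add_sign_eq ha
    rw [weight_cons_of_sign_eq (Int.sign_add_sign b), Int.natAbs_add_sign hb] at hw
    refine Or.inr ⟨b :: t, ⟨cons_ne_nil _ _, forall_mem_cons.2 ⟨hb, hnzt⟩, ?_⟩, modifyHead_cons⟩
    push_cast at hw ⊢
    omega

lemma halves_add_three (k : ℕ) :
    halves (k + 3) =
      consNegSign '' halves (k + 2) ∪ consSign '' halves (k + 1) ∪ growHead '' halves (k + 1) := by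
  refine Set.Subset.antisymm (fun l hl => mem_halves_add_three hl) ?_
  refine Set.union_subset (Set.union_subset ?_ ?_) ?_ <;> rintro _ ⟨l, hl, rfl⟩
  · exact consNegSign_mem_halves hl
  · exact consSign_mem_halves hl
  · exact growHead_mem_halves hl

lemma natAbs_headI_growHead {j : ℕ} {l : List ℤ} (hl : l ∈ halves j) :
    2 ≤ (growHead l).headI.natAbs := by
  obtain ⟨b, t, rfl⟩ := exists_cons_of_ne_nil hl.1
  have hb := hl.2.1 b mem_cons_self
  rw [growHead, modifyHead_cons, headI_cons, Int.natAbs_add_sign hb]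
  omega

lemma natAbs_sign_headI {j : ℕ} {l : List ℤ} (hl : l ∈ halves j) : l.headI.sign.natAbs = 1 := by
  obtain ⟨b, t, rfl⟩ := exists_cons_of_ne_nil hl.1
  exact Int.natAbs_sign_of_ne_zero (hl.2.1 b mem_cons_self)

theorem ncard_halves_add_three (k : ℕ) :
    (halves (k + 3)).ncard = (halves (k + 2)).ncard + 2 * (halves (k + 1)).ncard := by
  have hdisj₁ : Disjoint (consNegSign '' halves (k + 2)) (consSign '' halves (k + 1)) := by
    refine Set.disjoint_image_image fun l hl l' _ h => ?_
    obtain ⟨hs, rfl⟩ := cons.inj h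
    have := natAbs_sign_headI hl
    omega
  have hdisj₂ : Disjoint (consNegSign '' halves (k + 2) ∪ consSign '' halves (k + 1))
      (growHead '' halves (k + 1)) := by
    refine Set.disjoint_union_left.2 ⟨Set.disjoint_image_image ?_, Set.disjoint_image_image ?_⟩
    · intro l hl l' hl' h
      have := natAbs_headI_growHead hl'
      rw [← h, consNegSign, headI_cons, Int.natAbs_neg, natAbs_sign_headI hl] at this
      omega
    · intro l hl l' hl' h
      have := natAbs_headI_growHead hl'
      rw [← h, consSign, headI_cons, natAbs_sign_headI hl] at this
      omega
  have hfin := halves_finite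
  rw [halves_add_three, Set.ncard_union_eq hdisj₂ (((hfin _).image _).union ((hfin _).image _))
    ((hfin _).image _), Set.ncard_union_eq hdisj₁ ((hfin _).image _) ((hfin _).image _),
    Set.ncard_image_of_injective _ consNegSign_injective,
    Set.ncard_image_of_injective _ consSign_injective,
    Set.ncard_image_of_injective _ growHead_injective]
  ring

theorem epTot_recursion (c : ℕ) (hc : 7 ≤ c) :
    epTot c = epTot (c - 2) + 2 * epTot (c - 4) := by
  obtain ⟨k, hk⟩ : ∃ k, (c + 1) / 2 = k + 3 := ⟨(c + 1) / 2 - 3, by omega⟩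
  rw [epTot_eq_ncard_halves, epTot_eq_ncard_halves, epTot_eq_ncard_halves, hk,
    show (c - 2 + 1) / 2 = k + 2 by omega, show (c - 4 + 1) / 2 = k + 1 by omega]
  exact ncard_halves_add_three k
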